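/- In the Clifford algebra Cl_n, for integers a, i, j with 0 ≤ j ≤ i and a − i ≥ 1, one has y_a · (y_{a−1} y_{a−2} ⋯ y_{a−j}) · (y_a y_{a−1} ⋯ y_{a−i}) = (−1)^{(i+1)j+1} (y_{a−1} y_{a−2} ⋯ y_{a−i}) · (y_a y_{a−1} ⋯ y_{a+1−j}), where an empty product (j = 0) is interpreted as 1. -/
import Mathlib


noncomputable section

/-- The quadratic form `Q(v) = -(v_1² + ⋯ + v_n²)` on `ℂⁿ`. -/
def Qneg (n : ℕ) : QuadraticForm ℂ (Fin n → ℂ) :=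
  QuadraticMap.weightedSumSquares ℂ (fun _ : Fin n => (-1 : ℂ))

/-- The generator `c_a` (for `1 ≤ a ≤ n`) of the Clifford algebra `Cl_n` of `Q`,
with junk value `0` outside the valid range. -/
def cC (n a : ℕ) : CliffordAlgebra (Qneg n) :=
  if h : 1 ≤ a ∧ a ≤ n then
    CliffordAlgebra.ι (Qneg n) (Pi.single (⟨a - 1, by omega⟩ : Fin n) 1)
  else 0

/-- `y_a = (c_{a+1} - c_a)/√2 ∈ Cl_n`. -/
def yC (n a : ℕ) : CliffordAlgebra (Qneg n) :=
  ((Real.sqrt 2 : ℂ))⁻¹ • (cC n (a + 1) - cC n a)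

lemma Qneg_single (n : ℕ) (i : Fin n) : Qneg n (Pi.single i 1) = -1 := by
  simp [Qneg, QuadraticMap.weightedSumSquares_apply, Pi.single_apply]

lemma Qneg_polar (n : ℕ) (i j : Fin n) (h : i ≠ j) :
    QuadraticMap.polar (Qneg n) (Pi.single i 1) (Pi.single j 1) = 0 := by
  simp only [QuadraticMap.polar, Qneg, QuadraticMap.weightedSumSquares_apply, Pi.single_apply,
    Pi.add_apply, smul_eq_mul, add_mul, mul_add, mul_ite, ite_mul, mul_one, mul_zero, one_mul,
    zero_add, add_zero, Finset.sum_add_distrib, Finset.sum_ite_eq']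
  simp [Finset.sum_ite_of_false, h, h.symm, Finset.sum_ite_eq']

lemma cC_sq (n a : ℕ) (h1 : 1 ≤ a) (h2 : a ≤ n) : cC n a * cC n a = -1 := by
  rw [cC, dif_pos ⟨h1, h2⟩, CliffordAlgebra.ι_sq_scalar, Qneg_single]
  simp

lemma cC_anticomm (n a b : ℕ) (hab : a ≠ b) :
    cC n a * cC n b = -(cC n b * cC n a) := by
  by_cases ha : 1 ≤ a ∧ a ≤ n
  · by_cases hb : 1 ≤ b ∧ b ≤ n
    · rw [cC, dif_pos ha, cC, dif_pos hb]
      rw [eq_neg_iff_add_eq_zero, CliffordAlgebra.ι_mul_ι_add_swap, Qneg_polar]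
      · simp
      · simp only [ne_eq, Fin.mk.injEq]; omega
    · rw [(by rw [cC, dif_neg hb] : cC n b = 0)]; simp
  · rw [(by rw [cC, dif_neg ha] : cC n a = 0)]; simp

lemma half_key : ((Real.sqrt 2 : ℂ))⁻¹ * ((Real.sqrt 2 : ℂ))⁻¹ = (2:ℂ)⁻¹ := by
  rw [← mul_inv]
  norm_cast
  rw [Real.mul_self_sqrt (by norm_num)]
  norm_num

lemma yC_mul (n a b : ℕ) : yC n a * yC n b
    = (2:ℂ)⁻¹ • ((cC n (a+1) - cC n a) * (cC n (b+1) - cC n b)) := by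
  rw [yC, yC, smul_mul_smul_comm, half_key]

lemma yC_sq (n a : ℕ) (h1 : 1 ≤ a) (h2 : a + 1 ≤ n) : yC n a * yC n a = -1 := by
  rw [yC_mul]
  have e : (cC n (a+1) - cC n a) * (cC n (a+1) - cC n a) = -2 := by
    simp only [sub_mul, mul_sub]
    rw [cC_sq n (a+1) (by omega) h2, cC_sq n a h1 (by omega),
      cC_anticomm n (a+1) a (by omega), (by norm_num : (-2:CliffordAlgebra (Qneg n)) = -1 + -1)]
    abel
  rw [e]
  rw [show ((-2:CliffordAlgebra (Qneg n))) = (-2:ℂ) • 1 by rw [Algebra.smul_def, mul_one]; simp [map_ofNat], smul_smul]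
  norm_num

lemma yC_anticomm (n a b : ℕ) (h : b + 2 ≤ a) :
    yC n a * yC n b = -(yC n b * yC n a) := by
  rw [yC_mul, yC_mul, ← smul_neg]
  congr 1
  simp only [sub_mul, mul_sub]
  rw [cC_anticomm n (a+1) (b+1) (by omega), cC_anticomm n (a+1) b (by omega),
    cC_anticomm n a (b+1) (by omega), cC_anticomm n a b (by omega)]
  abel

lemma yC_braid (n a : ℕ) (h1 : 1 ≤ a) (h2 : a + 2 ≤ n) :
    yC n (a+1) * yC n a = 1 - yC n a * yC n (a+1) := by
  rw [eq_sub_iff_add_eq, yC_mul, yC_mul, ← smul_add]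
  have e : (cC n (a+1+1) - cC n (a+1)) * (cC n (a+1) - cC n a)
      + (cC n (a+1) - cC n a) * (cC n (a+1+1) - cC n (a+1)) = 2 := by
    simp only [sub_mul, mul_sub]
    rw [cC_anticomm n (a+2) (a+1) (by omega), cC_anticomm n (a+2) a (by omega),
      cC_anticomm n (a+1) a (by omega), cC_sq n (a+1) (by omega) (by omega),
      (by norm_num : (2:CliffordAlgebra (Qneg n)) = 1 + 1)]
    abel
  rw [e, show ((2:CliffordAlgebra (Qneg n))) = (2:ℂ) • 1 by rw [Algebra.smul_def, mul_one]; simp [map_ofNat], smul_smul]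
  norm_num

/-- `AA n b k = y_b y_{b-1} ⋯ y_{b-k+1}` -/
def AA (n b k : ℕ) : CliffordAlgebra (Qneg n) :=
  ((List.range k).map fun r => yC n (b - r)).prod

lemma AA_zero (n b : ℕ) : AA n b 0 = 1 := rfl

lemma AA_head (n b k : ℕ) : AA n b (k+1) = yC n b * AA n (b-1) k := by
  rw [AA, List.range_succ_eq_map, List.map_cons, List.prod_cons, List.map_map]
  simp only [Nat.sub_zero, AA]
  congr 2
  apply List.map_congr_left
  intro r _
  simp only [Function.comp_apply]
  congr 1
  omega

lemma AA_tail (n b k : ℕ) : AA n b (k+1) = AA n b k * yC n (b-k) := by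
  rw [AA, List.range_succ, List.map_append, List.prod_append]
  simp [AA]

lemma AA_add (n b k m : ℕ) : AA n b (k+m) = AA n b k * AA n (b-k) m := by
  induction m with
  | zero => rw [AA_zero]; simp
  | succ m ih =>
      rw [show k + (m+1) = (k+m)+1 by omega, AA_tail, ih, AA_tail, mul_assoc]
      congr 3
      omega

lemma yC_braid' (n a : ℕ) (h1 : 1 ≤ a) (h2 : a + 2 ≤ n) :
    yC n a * yC n (a+1) = 1 - yC n (a+1) * yC n a := by
  rw [yC_braid n a h1 h2, sub_sub_cancel]

lemma yC_comm_AA (n c b k : ℕ)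
    (h : ∀ r < k, yC n c * yC n (b - r) = -(yC n (b - r) * yC n c)) :
    yC n c * AA n b k = (-1:ℂ)^k • (AA n b k * yC n c) := by
  induction k with
  | zero => simp [AA_zero]
  | succ k ih =>
      rw [AA_tail, ← mul_assoc, ih (fun r hr => h r (by omega)), smul_mul_assoc, mul_assoc,
        h k (by omega)]
      simp [pow_succ, mul_smul, mul_assoc]

lemma yC_AA_high (n c b k : ℕ) (hbc : b + 2 ≤ c) :
    yC n c * AA n b k = (-1:ℂ)^k • (AA n b k * yC n c) :=
  yC_comm_AA n c b k (fun r _ => yC_anticomm n c (b - r) (by omega))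

lemma yC_AA_low (n c b k : ℕ) (h : c + k + 1 ≤ b) :
    yC n c * AA n b k = (-1:ℂ)^k • (AA n b k * yC n c) := by
  apply yC_comm_AA
  intro r hr
  rw [yC_anticomm n (b - r) c (by omega), neg_neg]

lemma AA_comm_AA (n c m b k : ℕ) (h : c + k + 1 ≤ b) :
    AA n c m * AA n b k = (-1:ℂ)^(m*k) • (AA n b k * AA n c m) := by
  induction m with
  | zero => simp [AA_zero]
  | succ m ih =>
      rw [AA_tail, mul_assoc, yC_AA_low n (c - m) b k (by omega), mul_smul_comm,
        ← mul_assoc, ih, smul_mul_assoc, smul_smul, ← pow_add, mul_assoc]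
      congr 2
      ring

lemma yC_piv (n b m : ℕ) (hbm : m + 2 ≤ b) (hbn : b + 1 ≤ n) :
    yC n (b - (m+1)) * AA n b (m+1)
      = (-1:ℂ)^m • (AA n b m - AA n b (m+1) * yC n (b - (m+1))) := by
  rw [AA_tail, ← mul_assoc, yC_AA_low n (b - (m+1)) b m (by omega), smul_mul_assoc, mul_assoc]
  have hb : b - m = (b - (m+1)) + 1 := by omega
  rw [hb, yC_braid' n (b - (m+1)) (by omega) (by omega), mul_sub, mul_one, mul_assoc]

lemma yC_R1 (n b m : ℕ) (hb : 1 ≤ b) (hbn : b + 2 ≤ n) :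
    yC n (b+1) * AA n b (m+1)
      = AA n (b-1) m + (-1:ℂ)^(m+1) • (AA n b (m+1) * yC n (b+1)) := by
  rw [AA_head, ← mul_assoc, yC_braid n b hb hbn, sub_mul, one_mul, mul_assoc,
    yC_AA_high n (b+1) (b-1) m (by omega), mul_smul_comm, ← mul_assoc, ← AA_head]
  rw [pow_succ, mul_comm ((-1:ℂ)^m), mul_smul, neg_one_smul, sub_eq_add_neg]

lemma L1 (n b : ℕ) (hbn : b + 1 ≤ n) :
    ∀ m, m + 1 ≤ b → AA n b (m+1) * AA n b m = AA n (b-1) m * AA n b (m+1) := by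
  intro m
  induction m with
  | zero => intro _; simp [AA_zero]
  | succ m ih =>
    intro hmb
    have ih' := ih (by omega)
    have L2 : AA n b (m+1) * AA n b (m+1) = -(AA n (b-1) m * AA n b m) := by
      calc AA n b (m+1) * AA n b (m+1)
          = yC n b * (AA n (b-1) m * AA n b (m+1)) := by rw [AA_head, mul_assoc]
        _ = yC n b * (AA n b (m+1) * AA n b m) := by rw [← ih']
        _ = (yC n b * yC n b) * (AA n (b-1) m * AA n b m) := by
              rw [AA_head]
              simp only [← mul_assoc]
        _ = -(AA n (b-1) m * AA n b m) := by
              rw [yC_sq n b (by omega) hbn, neg_one_mul]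
    have hpiv := yC_piv n b m (by omega) hbn
    have e : b - 1 - m = b - (m+1) := by omega
    calc AA n b (m+1+1) * AA n b (m+1)
        = AA n b (m+1) * (yC n (b - (m+1)) * AA n b (m+1)) := by
          rw [AA_tail n b (m+1), mul_assoc]
      _ = (-1:ℂ)^m • (AA n b (m+1) * AA n b m
            - AA n b (m+1) * AA n b (m+1) * yC n (b-(m+1))) := by
          rw [hpiv, mul_smul_comm, mul_sub, ← mul_assoc]
      _ = (-1:ℂ)^m • (AA n (b-1) m * AA n b (m+1)
            + AA n (b-1) m * AA n b m * yC n (b-(m+1))) := by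
          rw [ih', L2, neg_mul, sub_neg_eq_add, mul_assoc]
      _ = AA n (b-1) (m+1) * AA n b (m+1+1) := by
          rw [AA_tail n (b-1) m, AA_tail n b (m+1), e,
            mul_assoc (AA n (b-1) m) (yC n (b - (m+1))) (AA n b (m+1) * yC n (b-(m+1))),
            ← mul_assoc (yC n (b-(m+1))) (AA n b (m+1)) (yC n (b-(m+1))), hpiv,
            smul_mul_assoc, mul_smul_comm, sub_mul,
            mul_assoc (AA n b (m+1)) (yC n (b-(m+1))) (yC n (b-(m+1))),
            yC_sq n (b - (m+1)) (by omega) (by omega), mul_neg, mul_one, sub_neg_eq_add,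
            mul_add]
          simp only [← mul_assoc]
          rw [add_comm]

lemma L2 (n b m : ℕ) (hmb : m + 1 ≤ b) (hbn : b + 1 ≤ n) :
    AA n b (m+1) * AA n b (m+1) = -(AA n (b-1) m * AA n b m) := by
  have ih' := L1 n b hbn m hmb
  calc AA n b (m+1) * AA n b (m+1)
      = yC n b * (AA n (b-1) m * AA n b (m+1)) := by rw [AA_head, mul_assoc]
    _ = yC n b * (AA n b (m+1) * AA n b m) := by rw [← ih']
    _ = (yC n b * yC n b) * (AA n (b-1) m * AA n b m) := by
          rw [AA_head]; simp only [← mul_assoc]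
    _ = -(AA n (b-1) m * AA n b m) := by
          rw [yC_sq n b (by omega) hbn, neg_one_mul]

lemma core (n a j : ℕ) (hja : j + 1 ≤ a) (han : a + 1 ≤ n) :
    yC n a * AA n (a-1) j * AA n a (j+1) = -(AA n (a-1) j * AA n a j) := by
  match j with
  | 0 =>
      simp only [AA_zero, mul_one, one_mul]
      rw [AA_head, AA_zero, mul_one, yC_sq n a (by omega) han]
  | (m+1) =>
      have ha1 : (a - 1) + 1 = a := by omega
      have ha2 : (a - 1) - 1 = a - 2 := by omega
      set P := AA n (a-1) (m+1) with hP
      set P' := AA n (a-1) m with hP'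
      set Q := AA n (a-2) m with hQ
      have hR1 : yC n a * P = Q + (-1:ℂ)^(m+1) • (P * yC n a) := by
        have := yC_R1 n (a-1) m (by omega) (by omega)
        rw [ha1, ha2] at this
        exact this
      have hL1 : P * P' = Q * P := by
        have := L1 n (a-1) (by omega) m (by omega)
        rw [ha2] at this
        exact this
      have hL2 : P * P = -(Q * P') := by
        have := L2 n (a-1) m (by omega) (by omega)
        rw [ha2] at this
        exact this
      have hQy : yC n a * Q = (-1:ℂ)^m • (Q * yC n a) :=
        yC_AA_high n a (a-2) m (by omega)
      have hyQ : Q * yC n a = (-1:ℂ)^m • (yC n a * Q) := by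
        rw [hQy, smul_smul, ← pow_add,
          Even.neg_one_pow (⟨m, by ring⟩ : Even (m+m)), one_smul]
      have hPy : P * yC n a = (-1:ℂ)^(m+1) • (yC n a * P - Q) := by
        rw [hR1]
        rw [add_sub_cancel_left, smul_smul, ← pow_add,
          Even.neg_one_pow (⟨m+1, by ring⟩ : Even ((m+1)+(m+1))), one_smul]
      have hAhead : AA n a (m+1+1) = yC n a * P := by rw [AA_head]
      have hAhead' : AA n a (m+1) = yC n a * P' := by rw [AA_head]
      rw [hAhead, hAhead', mul_assoc]
      calc yC n a * (P * (yC n a * P))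
          = (yC n a * P) * (yC n a * P) := by rw [← mul_assoc]
        _ = (Q + (-1:ℂ)^(m+1) • (P * yC n a)) * (yC n a * P) := by rw [hR1]
        _ = Q * (yC n a * P) + (-1:ℂ)^(m+1) • (P * (yC n a * yC n a) * P) := by
              rw [add_mul, smul_mul_assoc]
              simp only [← mul_assoc]
        _ = (-1:ℂ)^m • (yC n a * (P * P')) + (-1:ℂ)^(m+1) • (Q * P') := by
              rw [yC_sq n a (by omega) han, mul_neg, mul_one, neg_mul, smul_neg, hL2,
                smul_neg, neg_neg, ← mul_assoc Q, hyQ, smul_mul_assoc,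
                mul_assoc (yC n a) Q P, ← hL1]
        _ = -(P * (yC n a * P')) := by
              rw [← mul_assoc P (yC n a) P', hPy, smul_mul_assoc, sub_mul, smul_sub, neg_sub,
                pow_succ ((-1:ℂ)) m]
              simp only [mul_neg_one, neg_smul, neg_neg, sub_neg_eq_add, mul_assoc]
              abel

/-- In `Cl_n`: for `0 ≤ j ≤ i` and `a - i ≥ 1`, one has
`y_a (y_{a-1} ⋯ y_{a-j}) (y_a y_{a-1} ⋯ y_{a-i})
  = (-1)^{(i+1)j+1} (y_{a-1} ⋯ y_{a-i}) (y_a ⋯ y_{a+1-j})`,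
where an empty product (`j = 0`) is `1`. -/
theorem statement13 (n a i j : ℕ) (hj : j ≤ i) (hai : i < a) (han : a < n) :
    yC n a * (((List.range j).map fun r => yC n (a - 1 - r)).prod)
        * (((List.range (i + 1)).map fun r => yC n (a - r)).prod)
      = (-1 : ℂ) ^ ((i + 1) * j + 1) •
        ((((List.range i).map fun r => yC n (a - 1 - r)).prod)
          * (((List.range j).map fun r => yC n (a - r)).prod)) := by
  obtain ⟨d, rfl⟩ : ∃ d, i = j + d := ⟨i - j, by omega⟩
  show yC n a * AA n (a-1) j * AA n a (j+d+1)
      = (-1:ℂ)^((j+d+1)*j+1) • (AA n (a-1) (j+d) * AA n a j)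
  have key : ((-1:ℂ))^((j+1+d)*j+1) * ((-1:ℂ))^(d*j) = -1 := by
    rw [← pow_add]
    apply Odd.neg_one_pow
    have h1 : Even (j*(j+1)) := Nat.even_mul_succ_self j
    have h2 : Even (d*j + d*j) := ⟨d*j, rfl⟩
    have h3 : (j+1+d)*j + 1 + d*j = (j*(j+1) + (d*j + d*j)) + 1 := by ring
    rw [h3]
    exact (h1.add h2).add_one
  rw [show j + d + 1 = (j+1) + d by omega, AA_add n a (j+1) d,
    AA_add n (a-1) j d, show (a-1) - j = a - (j+1) by omega,
    ← mul_assoc, core n a j (by omega) (by omega),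
    mul_assoc (AA n (a-1) j) (AA n (a - (j+1)) d) (AA n a j),
    AA_comm_AA n (a - (j+1)) d a j (by omega),
    mul_smul_comm, smul_smul, key, neg_smul, one_smul, neg_mul, mul_assoc]
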